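/- Let C be a cartesian category and G an internal group such that G* : C → [G, C] has a left adjoint Σ_G and the adjunction Σ_G ⊣ G* satisfies Frobenius reciprocity. Then every adjunction L ⊣ R : C ⇄ [G, C] over C that satisfies Frobenius reciprocity is stably Frobenius. -/

import Mathlib

open CategoryTheory CategoryTheory.Limits

universe v u v₂ u₂ v₃ u₃

noncomputable section

attribute [simp] prod.lift_fst prod.lift_snd prod.lift_fst_assoc prod.lift_snd_assoc

namespace PrincipalBundles

variable {C : Type u} [Category.{v} C] [HasFiniteLimits C]

/-- An internal group in a cartesian category `C`: an object `G` with multiplication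
`m : G ⨯ G ⟶ G`, unit `e : 1 ⟶ G` and inverse `i : G ⟶ G` satisfying the group axioms. -/
structure InternalGroup (C : Type u) [Category.{v} C] [HasFiniteLimits C] where
  G : C
  m : G ⨯ G ⟶ G
  e : ⊤_ C ⟶ G
  i : G ⟶ G
  mul_assoc' : (prod.associator G G G).inv ≫ prod.map m (𝟙 G) ≫ m = prod.map (𝟙 G) m ≫ m
  one_mul' : prod.lift (terminal.from G ≫ e) (𝟙 G) ≫ m = 𝟙 G
  mul_one' : prod.lift (𝟙 G) (terminal.from G ≫ e) ≫ m = 𝟙 G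
  inv_mul' : prod.lift i (𝟙 G) ≫ m = terminal.from G ≫ e
  mul_inv' : prod.lift (𝟙 G) i ≫ m = terminal.from G ≫ e

namespace InternalGroup

variable (Gr : InternalGroup C)

/-- Multiplication of generalized elements. -/
theorem one_mul_elt {T : C} (b : T ⟶ Gr.G) :
    prod.lift (terminal.from T ≫ Gr.e) b ≫ Gr.m = b := by
  have h : prod.lift (terminal.from T ≫ Gr.e) b
      = b ≫ prod.lift (terminal.from Gr.G ≫ Gr.e) (𝟙 Gr.G) := by
    rw [prod.comp_lift, ← Category.assoc, terminal.comp_from, Category.comp_id]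
  rw [h, Category.assoc, Gr.one_mul', Category.comp_id]

theorem mul_one_elt {T : C} (a : T ⟶ Gr.G) :
    prod.lift a (terminal.from T ≫ Gr.e) ≫ Gr.m = a := by
  have h : prod.lift a (terminal.from T ≫ Gr.e)
      = a ≫ prod.lift (𝟙 Gr.G) (terminal.from Gr.G ≫ Gr.e) := by
    rw [prod.comp_lift, ← Category.assoc, terminal.comp_from, Category.comp_id]
  rw [h, Category.assoc, Gr.mul_one', Category.comp_id]

theorem mul_assoc_elt {T : C} (a b c : T ⟶ Gr.G) :
    prod.lift (prod.lift a b ≫ Gr.m) c ≫ Gr.m = prod.lift a (prod.lift b c ≫ Gr.m) ≫ Gr.m := by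
  have h1 : prod.lift (prod.lift a b ≫ Gr.m) c
      = prod.lift (prod.lift a b) c ≫ prod.map Gr.m (𝟙 _) := by simp
  have h2 : prod.lift (prod.lift a b) c
      = prod.lift a (prod.lift b c) ≫ (prod.associator Gr.G Gr.G Gr.G).inv := by
    ext <;> simp
  have h3 : prod.lift a (prod.lift b c ≫ Gr.m)
      = prod.lift a (prod.lift b c) ≫ prod.map (𝟙 _) Gr.m := by simp
  rw [h1, h2, h3, Category.assoc, Category.assoc, Gr.mul_assoc', ← Category.assoc]

theorem inv_mul_elt {T : C} (a : T ⟶ Gr.G) :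
    prod.lift (a ≫ Gr.i) a ≫ Gr.m = terminal.from T ≫ Gr.e := by
  have h : prod.lift (a ≫ Gr.i) a = a ≫ prod.lift Gr.i (𝟙 Gr.G) := by
    rw [prod.comp_lift, Category.comp_id]
  rw [h, Category.assoc, Gr.inv_mul', ← Category.assoc, terminal.comp_from]

theorem mul_inv_elt {T : C} (a : T ⟶ Gr.G) :
    prod.lift a (a ≫ Gr.i) ≫ Gr.m = terminal.from T ≫ Gr.e := by
  have h : prod.lift a (a ≫ Gr.i) = a ≫ prod.lift (𝟙 Gr.G) Gr.i := by
    rw [prod.comp_lift, Category.comp_id]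
  rw [h, Category.assoc, Gr.mul_inv', ← Category.assoc, terminal.comp_from]

/-- The monad `X ↦ G ⨯ X` on `C` associated to an internal group `G`; its unit at `X` is
`(e ∘ !, id) : X ⟶ G ⨯ X` and its multiplication at `X` is `m ⨯ id : G ⨯ (G ⨯ X) ⟶ G ⨯ X`. -/
def actionMonad : Monad C where
  toFunctor := prod.functor.obj Gr.G
  η :=
    { app := fun X => prod.lift (terminal.from X ≫ Gr.e) (𝟙 X)
      naturality := by
        intro X Y f
        dsimp [prod.functor]
        ext
        · simp [← Category.assoc, terminal.comp_from]
        · simp }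
  μ :=
    { app := fun X => (prod.associator Gr.G Gr.G X).inv ≫ prod.map Gr.m (𝟙 X)
      naturality := by
        intro X Y f
        dsimp [prod.functor]
        ext
        · simp [prod.comp_lift_assoc]
        · simp }
  assoc := by
    intro X
    dsimp [prod.functor]
    ext
    · simp only [prod.comp_lift_assoc, Category.assoc, prod.map_fst, prod.map_snd,
        prod.lift_fst, prod.lift_snd, Category.comp_id, Category.id_comp,
        prod.associator_inv, prod.lift_fst_assoc, prod.comp_lift, prod.map_fst_assoc,
        prod.map_snd_assoc, prod.lift_snd_assoc]
      exact (Gr.mul_assoc_elt _ _ _).symm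
    · simp
  left_unit := by
    intro X
    dsimp [prod.functor]
    ext
    · simp [prod.comp_lift_assoc, Gr.one_mul_elt]
    · simp
  right_unit := by
    intro X
    dsimp [prod.functor]
    ext
    · simp only [prod.comp_lift_assoc, Category.assoc, prod.map_fst, prod.map_snd,
        prod.lift_fst, prod.lift_snd, Category.comp_id, Category.id_comp,
        prod.associator_inv, prod.lift_fst_assoc]
      simp only [prod.map_snd_assoc, prod.lift_fst_assoc, Category.assoc, prod.lift_fst]
      rw [← Category.assoc prod.snd, terminal.comp_from]
      exact Gr.mul_one_elt prod.fst
    · simp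

/-- The category `[G, C]` of `G`-objects and `G`-homomorphisms: objects of `C` equipped with
a `G`-action `a : G ⨯ A ⟶ A` satisfying the unit and associativity laws, with morphisms the
morphisms of `C` commuting with the actions.  (Implemented as the Eilenberg–Moore category of
the monad `G ⨯ (-)`; the algebra axioms are literally the action axioms, and algebra morphisms
are literally the `G`-homomorphisms.) -/
abbrev GObject := (actionMonad Gr).Algebra

instance : HasFiniteLimits (GObject Gr) :=
  ⟨fun _ _ _ => ⟨fun D => Monad.hasLimit_of_comp_forget_hasLimit D⟩⟩

variable {Gr}

/-- The action of a `G`-object, seen as a morphism `G ⨯ A ⟶ A` in `C`. -/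
def act (A : GObject Gr) : Gr.G ⨯ A.A ⟶ A.A := A.a

/-- Elementwise unit law for an action. -/
theorem act_one_elt (A : GObject Gr) {T : C} (y : T ⟶ A.A) :
    prod.lift (terminal.from T ≫ Gr.e) y ≫ act A = y := by
  have h : prod.lift (terminal.from T ≫ Gr.e) y
      = y ≫ prod.lift (terminal.from A.A ≫ Gr.e) (𝟙 A.A) := by
    rw [prod.comp_lift, ← Category.assoc, terminal.comp_from, Category.comp_id]
  have hu := A.unit
  dsimp [actionMonad] at hu
  rw [h, Category.assoc, act]
  erw [hu]
  rw [Category.comp_id]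

/-- Elementwise associativity law for an action. -/
theorem act_assoc_elt (A : GObject Gr) {T : C} (a b : T ⟶ Gr.G) (y : T ⟶ A.A) :
    prod.lift (prod.lift a b ≫ Gr.m) y ≫ act A
      = prod.lift a (prod.lift b y ≫ act A) ≫ act A := by
  have ha : (prod.associator Gr.G Gr.G A.A).inv ≫ prod.map Gr.m (𝟙 A.A) ≫ A.a
      = prod.map (𝟙 Gr.G) A.a ≫ A.a := by
    have ha0 := A.assoc
    dsimp [actionMonad, prod.functor] at ha0
    simp only [prod.associator_inv, Category.assoc] at ha0 ⊢
    erw [prod.lift_map_assoc] at ha0 ⊢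
    simp only [Category.comp_id] at ha0 ⊢
    exact ha0
  have h1 : prod.lift (prod.lift a b ≫ Gr.m) y
      = prod.lift (prod.lift a b) y ≫ prod.map Gr.m (𝟙 _) := by simp
  have h2 : prod.lift (prod.lift a b) y
      = prod.lift a (prod.lift b y) ≫ (prod.associator Gr.G Gr.G A.A).inv := by
    ext <;> simp
  have h3 : prod.lift a (prod.lift b y ≫ act A)
      = prod.lift a (prod.lift b y) ≫ prod.map (𝟙 _) (act A) := by simp
  rw [h1, h2, h3, Category.assoc, Category.assoc, act, ha]
  exact (Category.assoc _ _ _).symm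

variable (Gr)

/-- The functor `G* : C ⥤ [G, C]` equipping an object with the trivial action `π₂`. -/
def trivAction : C ⥤ GObject Gr where
  obj X :=
    { A := X
      a := prod.snd
      unit := by simp [actionMonad]; exact prod.lift_snd _ _
      assoc := by simp [actionMonad, prod.functor] }
  map f :=
    { f := f
      h := by simp [actionMonad, prod.functor] }
  map_id X := by ext; rfl
  map_comp f g := by ext; rfl

/-- The `G`-object `(G, m)`: `G` acting on itself by multiplication. -/
def selfAction : GObject Gr where
  A := Gr.G
  a := Gr.m
  unit := Gr.one_mul'
  assoc := by
    have h := Gr.mul_assoc'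
    dsimp [actionMonad, prod.functor]
    simpa [Category.assoc] using h

/-- The product of two `G`-objects: the product in `C` with the componentwise action. -/
def prodGObject (A B : GObject Gr) : GObject Gr where
  A := A.A ⨯ B.A
  a := prod.lift (prod.map (𝟙 Gr.G) prod.fst ≫ act A) (prod.map (𝟙 Gr.G) prod.snd ≫ act B)
  unit := by
    dsimp [actionMonad]
    apply Limits.prod.hom_ext
    · have key : (prod.lift (terminal.from (A.A ⨯ B.A) ≫ Gr.e) (𝟙 (A.A ⨯ B.A)) ≫
            prod.lift (prod.map (𝟙 Gr.G) prod.fst ≫ act A)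
              (prod.map (𝟙 Gr.G) prod.snd ≫ act B)) ≫ prod.fst = prod.fst := by
        simp only [Category.assoc, prod.lift_fst, prod.lift_map_assoc, Category.comp_id,
          Category.id_comp]
        exact act_one_elt A prod.fst
      exact key.trans (Category.id_comp _).symm
    · have key : (prod.lift (terminal.from (A.A ⨯ B.A) ≫ Gr.e) (𝟙 (A.A ⨯ B.A)) ≫
            prod.lift (prod.map (𝟙 Gr.G) prod.fst ≫ act A)
              (prod.map (𝟙 Gr.G) prod.snd ≫ act B)) ≫ prod.snd = prod.snd := by
        simp only [Category.assoc, prod.lift_snd, prod.lift_map_assoc, Category.comp_id,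
          Category.id_comp]
        exact act_one_elt B prod.snd
      exact key.trans (Category.id_comp _).symm
  assoc := by
    dsimp [actionMonad, prod.functor]
    apply Limits.prod.hom_ext
    · simp only [prod.comp_lift_assoc, Category.assoc, prod.map_fst, prod.map_snd,
        prod.lift_fst, prod.lift_snd, Category.comp_id, Category.id_comp,
        prod.associator_inv, prod.lift_fst_assoc, prod.comp_lift, prod.map_fst_assoc,
        prod.map_snd_assoc, prod.lift_snd_assoc, prod.map_map_assoc, prod.map_map]
      rw [prod.lift_map_assoc]
      have hR : prod.map (𝟙 Gr.G) (prod.map (𝟙 Gr.G) (prod.fst : A.A ⨯ B.A ⟶ A.A) ≫ act A) ≫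
              act A
          = prod.lift (prod.fst : Gr.G ⨯ (Gr.G ⨯ (A.A ⨯ B.A)) ⟶ Gr.G)
              (prod.lift ((prod.snd : Gr.G ⨯ (Gr.G ⨯ (A.A ⨯ B.A)) ⟶ Gr.G ⨯ (A.A ⨯ B.A)) ≫
                  prod.fst)
                ((prod.snd ≫ prod.snd) ≫ prod.fst) ≫ act A) ≫
            act A := by
        congr 1
        apply Limits.prod.hom_ext
        · simp
        · simp only [prod.map_snd, prod.lift_snd]
          rw [← Category.assoc]
          congr 1
          apply Limits.prod.hom_ext <;> simp
      rw [hR]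
      exact act_assoc_elt A prod.fst (prod.snd ≫ prod.fst) ((prod.snd ≫ prod.snd) ≫ prod.fst)
    · simp only [prod.comp_lift_assoc, Category.assoc, prod.map_fst, prod.map_snd,
        prod.lift_fst, prod.lift_snd, Category.comp_id, Category.id_comp,
        prod.associator_inv, prod.lift_fst_assoc, prod.comp_lift, prod.map_fst_assoc,
        prod.map_snd_assoc, prod.lift_snd_assoc, prod.map_map_assoc, prod.map_map]
      rw [prod.lift_map_assoc]
      have hR : prod.map (𝟙 Gr.G) (prod.map (𝟙 Gr.G) (prod.snd : A.A ⨯ B.A ⟶ B.A) ≫ act B) ≫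
              act B
          = prod.lift (prod.fst : Gr.G ⨯ (Gr.G ⨯ (A.A ⨯ B.A)) ⟶ Gr.G)
              (prod.lift ((prod.snd : Gr.G ⨯ (Gr.G ⨯ (A.A ⨯ B.A)) ⟶ Gr.G ⨯ (A.A ⨯ B.A)) ≫
                  prod.fst)
                ((prod.snd ≫ prod.snd) ≫ prod.snd) ≫ act B) ≫
            act B := by
        congr 1
        apply Limits.prod.hom_ext
        · simp
        · simp only [prod.map_snd, prod.lift_snd]
          rw [← Category.assoc]
          congr 1
          apply Limits.prod.hom_ext <;> simp
      rw [hR]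
      exact act_assoc_elt B prod.fst (prod.snd ≫ prod.fst) ((prod.snd ≫ prod.snd) ≫ prod.snd)

variable {Gr}

/-- First projection of the product of `G`-objects. -/
def prodGFst (A B : GObject Gr) : prodGObject Gr A B ⟶ A where
  f := prod.fst
  h := by simp [prodGObject, actionMonad, prod.functor, act]

/-- Second projection of the product of `G`-objects. -/
def prodGSnd (A B : GObject Gr) : prodGObject Gr A B ⟶ B where
  f := prod.snd
  h := by simp [prodGObject, actionMonad, prod.functor, act]

/-- Functoriality of the product of `G`-objects. -/
def prodGHom {A A' B B' : GObject Gr} (u : A ⟶ A') (v : B ⟶ B') :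
    prodGObject Gr A B ⟶ prodGObject Gr A' B' where
  f := prod.map u.f v.f
  h := by
    have hu : prod.map (𝟙 Gr.G) u.f ≫ act A' = act A ≫ u.f := by
      have h0 := u.h; dsimp [actionMonad, prod.functor] at h0; exact h0
    have hv : prod.map (𝟙 Gr.G) v.f ≫ act B' = act B ≫ v.f := by
      have h0 := v.h; dsimp [actionMonad, prod.functor] at h0; exact h0
    dsimp [prodGObject, actionMonad, prod.functor]
    apply Limits.prod.hom_ext
    · simp only [Category.assoc, prod.lift_fst, prod.map_fst, prod.lift_fst_assoc]
      rw [← Category.assoc, prod.map_map, Category.id_comp, prod.map_fst]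
      rw [show prod.map (𝟙 Gr.G) (prod.fst ≫ u.f)
            = prod.map (𝟙 Gr.G) prod.fst ≫ prod.map (𝟙 Gr.G) u.f by
          rw [prod.map_map, Category.comp_id]]
      rw [Category.assoc, hu]
    · simp only [Category.assoc, prod.lift_snd, prod.map_snd, prod.lift_snd_assoc]
      rw [← Category.assoc, prod.map_map, Category.id_comp, prod.map_snd]
      rw [show prod.map (𝟙 Gr.G) (prod.snd ≫ v.f)
            = prod.map (𝟙 Gr.G) prod.snd ≫ prod.map (𝟙 Gr.G) v.f by
          rw [prod.map_map, Category.comp_id]]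
      rw [Category.assoc, hv]

variable (Gr)

/-- The functor `(P, p) ⨯ (-) : [G, C] ⥤ [G, C]`. -/
def prodGFunctor (P : GObject Gr) : GObject Gr ⥤ GObject Gr where
  obj A := prodGObject Gr P A
  map h := prodGHom (𝟙 P) h
  map_id A := by
    apply Monad.Algebra.Hom.ext
    show prod.map (𝟙 P : P ⟶ P).f (𝟙 A : A ⟶ A).f = (𝟙 (prodGObject Gr P A) : _ ⟶ _).f
    rw [Monad.Algebra.id_f, Monad.Algebra.id_f, Monad.Algebra.id_f, prod.map_id_id]
    rfl
  map_comp f g := by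
    apply Monad.Algebra.Hom.ext
    show prod.map (𝟙 P : P ⟶ P).f (f ≫ g).f = (prodGHom (𝟙 P) f ≫ prodGHom (𝟙 P) g).f
    rw [Monad.Algebra.comp_f, Monad.Algebra.comp_f]
    show prod.map (𝟙 P : P ⟶ P).f (f.f ≫ g.f)
        = prod.map (𝟙 P : P ⟶ P).f f.f ≫ prod.map (𝟙 P : P ⟶ P).f g.f
    rw [prod.map_map]
    rw [Monad.Algebra.id_f, Category.comp_id]

end InternalGroup

open InternalGroup

section Frobenius

variable {D : Type u₂} [Category.{v₂} D] [HasFiniteLimits D]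
variable {E : Type u₃} [Category.{v₃} E] [HasFiniteLimits E]

/-- The canonical Frobenius map `L(R X ⨯ W) ⟶ X ⨯ L W` of an adjunction `L ⊣ R`, namely
`(L π₁, L π₂)` followed by `ε_X ⨯ id` where `ε` is the counit. -/
def frobMap {L : D ⥤ E} {R : E ⥤ D} (adj : L ⊣ R) (W : D) (X : E) :
    L.obj (R.obj X ⨯ W) ⟶ X ⨯ L.obj W :=
  prod.lift (L.map prod.fst ≫ adj.counit.app X) (L.map prod.snd)

/-- An adjunction `L ⊣ R` between cartesian categories satisfies Frobenius reciprocity if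
all the canonical maps `L(R X ⨯ W) ⟶ X ⨯ L W` are isomorphisms. -/
def IsFrobenius {L : D ⥤ E} {R : E ⥤ D} (adj : L ⊣ R) : Prop :=
  ∀ (W : D) (X : E), IsIso (frobMap adj W X)

/-- The left adjoint of the adjunction `L ⊣ R` sliced at `X`, sending `g : W ⟶ R X`
to its adjoint transpose `L W ⟶ X`. -/
def slicedL {L : D ⥤ E} {R : E ⥤ D} (adj : L ⊣ R) (X : E) : Over (R.obj X) ⥤ Over X where
  obj W := Over.mk (L.map W.hom ≫ adj.counit.app X)
  map {W W'} u :=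
    Over.homMk (L.map u.left) (by
      dsimp
      rw [← Category.assoc, ← L.map_comp, Over.w u])
  map_id W := by ext; dsimp; simp
  map_comp f g := by ext; dsimp; simp

/-- The right adjoint of the adjunction `L ⊣ R` sliced at `X`, sending `f : Y ⟶ X` to
`R f : R Y ⟶ R X`. -/
def slicedR {L : D ⥤ E} {R : E ⥤ D} (adj : L ⊣ R) (X : E) : Over X ⥤ Over (R.obj X) where
  obj Y := Over.mk (R.map Y.hom)
  map {Y Y'} u :=
    Over.homMk (R.map u.left) (by
      dsimp
      rw [← R.map_comp, Over.w u])
  map_id Y := by ext; dsimp; simp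
  map_comp f g := by ext; dsimp; simp

/-- The sliced adjunction `L_X ⊣ R_X : D / R X ⇄ E / X` of `L ⊣ R` at an object `X`. -/
def slicedAdj {L : D ⥤ E} {R : E ⥤ D} (adj : L ⊣ R) (X : E) : slicedL adj X ⊣ slicedR adj X :=
  Adjunction.mkOfHomEquiv
    { homEquiv := fun W Y =>
        { toFun := fun u => Over.homMk ((adj.homEquiv _ _) u.left) (by
            have hu := Over.w u
            dsimp [slicedL] at hu
            dsimp [slicedR]
            erw [Adjunction.homEquiv_unit, Category.assoc, ← R.map_comp, hu, R.map_comp,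
              adj.unit_naturality_assoc, adj.right_triangle_components, Category.comp_id])
          invFun := fun v => Over.homMk ((adj.homEquiv _ _).symm v.left) (by
            have hv := Over.w v
            dsimp [slicedR] at hv
            dsimp [slicedL]
            erw [Adjunction.homEquiv_counit, Category.assoc, ← adj.counit_naturality,
              ← Category.assoc, ← L.map_comp, hv])
          left_inv := fun u => by ext; exact (adj.homEquiv _ _).left_inv u.left
          right_inv := fun v => by ext; exact (adj.homEquiv _ _).right_inv v.left }
      homEquiv_naturality_left_symm := by
        intro W' W Y f g
        ext
        exact adj.homEquiv_naturality_left_symm _ _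
      homEquiv_naturality_right := by
        intro W Y Y' f g
        ext
        exact adj.homEquiv_naturality_right _ _ }

/-- An adjunction between cartesian categories is stably Frobenius if every sliced
adjunction satisfies Frobenius reciprocity. -/
def IsStablyFrobenius {L : D ⥤ E} {R : E ⥤ D} (adj : L ⊣ R) : Prop :=
  ∀ X : E, IsFrobenius (slicedAdj adj X)

end Frobenius

/-- A morphism `f : X ⟶ Y` is an effective descent morphism if the pullback functor
`f* : C/Y ⥤ C/X` is monadic. -/
def EffectiveDescentMorphism {X Y : C} (f : X ⟶ Y) : Prop :=
  Nonempty (MonadicRightAdjoint (Over.pullback f))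

/-- A principal `G`-bundle: a `G`-object `(P, p)` such that `! : P ⟶ 1` is an effective
descent morphism and `(p, π₂) : G ⨯ P ⟶ P ⨯ P` is an isomorphism. -/
def IsPrincipal (Gr : InternalGroup C) (P : InternalGroup.GObject Gr) : Prop :=
  EffectiveDescentMorphism (terminal.from P.A) ∧
    IsIso (prod.lift (InternalGroup.act P) prod.snd)

/-- The functor `C ⥤ C/P` sending `X` to the projection `P ⨯ X ⟶ P`. -/
def projFunctor (P : C) : C ⥤ Over P where
  obj X := Over.mk (prod.fst : P ⨯ X ⟶ P)
  map {X Y} f := Over.homMk (prod.map (𝟙 P) f) (by simp)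
  map_id X := by ext; dsimp; simp
  map_comp f g := by ext; dsimp; simp

theorem cofork_condition (Gr : InternalGroup C) (P : InternalGroup.GObject Gr) (X : C) :
    ((prod.associator Gr.G P.A X).inv ≫ prod.map (InternalGroup.act P) (𝟙 X)) ≫
        (prod.snd : P.A ⨯ X ⟶ X)
      = (prod.snd : Gr.G ⨯ (P.A ⨯ X) ⟶ P.A ⨯ X) ≫ prod.snd := by
  simp

/-- The object `G ⨯ X` of `C/X` underlying the internal group induced by `G` in `C/X`. -/
def overG (Gr : InternalGroup C) (X : C) : Over X := Over.mk (prod.snd : Gr.G ⨯ X ⟶ X)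

section OverGroup

variable {Gr : InternalGroup C} {X : C}

/-- The `G`-component of a morphism into `G ⨯ X` over `X`. -/
abbrev toG {A : Over X} (u : A ⟶ overG Gr X) : A.left ⟶ Gr.G := u.left ≫ prod.fst

theorem homGX_ext {A : Over X} {u v : A ⟶ overG Gr X} (h : toG u = toG v) : u = v := by
  ext
  apply Limits.prod.hom_ext
  · exact h
  · have hu := Over.w u
    have hv := Over.w v
    dsimp [overG] at hu hv
    rw [hu, hv]

theorem toG_comp {A B : Over X} (w : A ⟶ B) (u : B ⟶ overG Gr X) :
    toG (w ≫ u) = w.left ≫ toG u := by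
  dsimp [toG]
  exact Category.assoc _ _ _

variable (Gr X)

/-- The multiplication `m ⨯ id_X : (G ⨯ G) ⨯ X ⟶ G ⨯ X` of the induced group in `C/X`,
viewing `(G ⨯ X) ⨯_X (G ⨯ X) ≅ (G ⨯ G) ⨯ X`. -/
def overMul : overG Gr X ⨯ overG Gr X ⟶ overG Gr X :=
  Over.homMk
    (prod.lift
      (prod.lift (toG (prod.fst : overG Gr X ⨯ overG Gr X ⟶ overG Gr X))
        (toG (prod.snd : overG Gr X ⨯ overG Gr X ⟶ overG Gr X)) ≫ Gr.m)
      (overG Gr X ⨯ overG Gr X).hom)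
    (by simp [overG])

/-- The unit `(e ∘ !, id_X) : X ⟶ G ⨯ X` of the induced group in `C/X`. -/
def overOne : ⊤_ (Over X) ⟶ overG Gr X :=
  Over.homMk (prod.lift (terminal.from (⊤_ Over X).left ≫ Gr.e) (⊤_ Over X).hom)
    (by simp [overG])

/-- The inverse `i ⨯ id_X : G ⨯ X ⟶ G ⨯ X` of the induced group in `C/X`. -/
def overInv : overG Gr X ⟶ overG Gr X :=
  Over.homMk (prod.map Gr.i (𝟙 X)) (by simp [overG])

variable {Gr X}

theorem toG_overMul {A : Over X} (u : A ⟶ overG Gr X ⨯ overG Gr X) :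
    toG (u ≫ overMul Gr X)
      = prod.lift (toG (u ≫ prod.fst)) (toG (u ≫ prod.snd)) ≫ Gr.m := by
  rw [toG_comp]
  dsimp [overMul, toG]
  erw [prod.lift_fst, prod.comp_lift_assoc]
  erw [Category.assoc, Category.assoc]

theorem toG_overOne {A : Over X} (u : A ⟶ ⊤_ (Over X)) :
    toG (u ≫ overOne Gr X) = terminal.from A.left ≫ Gr.e := by
  rw [toG_comp]
  dsimp [overOne, toG]
  erw [prod.lift_fst, ← Category.assoc, terminal.comp_from]

end OverGroup

/-- The internal group `G ⨯ X` in the slice category `C/X` induced by an internal group `G`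
of `C`: its multiplication is induced by `m ⨯ id_X`, its unit by `(e ∘ !, id_X)` and its
inverse by `i ⨯ id_X`. -/
def inducedGroup (Gr : InternalGroup C) (X : C) : InternalGroup (Over X) where
  G := overG Gr X
  m := overMul Gr X
  e := overOne Gr X
  i := overInv Gr X
  one_mul' := by
    apply homGX_ext
    rw [toG_overMul, prod.lift_fst, prod.lift_snd, toG_overOne]
    simp only [toG, Over.id_left, Category.id_comp]
    erw [Category.id_comp]
    exact Gr.one_mul_elt (prod.fst : Gr.G ⨯ X ⟶ Gr.G)
  mul_one' := by
    apply homGX_ext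
    rw [toG_overMul, prod.lift_fst, prod.lift_snd, toG_overOne]
    simp only [toG, Over.id_left, Category.id_comp]
    erw [Category.id_comp]
    exact Gr.mul_one_elt (prod.fst : Gr.G ⨯ X ⟶ Gr.G)
  mul_assoc' := by
    apply homGX_ext
    have l1 : ((prod.associator (overG Gr X) (overG Gr X) (overG Gr X)).inv ≫
          prod.map (overMul Gr X) (𝟙 (overG Gr X))) ≫ prod.fst
        = prod.lift prod.fst (prod.snd ≫ prod.fst) ≫ overMul Gr X := by
      rw [Category.assoc, prod.map_fst, ← Category.assoc]
      congr 1
      simp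
    have l2 : ((prod.associator (overG Gr X) (overG Gr X) (overG Gr X)).inv ≫
          prod.map (overMul Gr X) (𝟙 (overG Gr X))) ≫ prod.snd
        = prod.snd ≫ prod.snd := by
      rw [Category.assoc, prod.map_snd, Category.comp_id]
      simp
    have l3 : prod.map (𝟙 (overG Gr X)) (overMul Gr X) ≫
          (prod.fst : overG Gr X ⨯ overG Gr X ⟶ overG Gr X) = prod.fst := by
      rw [prod.map_fst, Category.comp_id]
    have l4 : prod.map (𝟙 (overG Gr X)) (overMul Gr X) ≫
          (prod.snd : overG Gr X ⨯ overG Gr X ⟶ overG Gr X)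
        = prod.snd ≫ overMul Gr X := by
      rw [prod.map_snd]
    rw [← Category.assoc, toG_overMul, l1, l2, toG_overMul, prod.lift_fst, prod.lift_snd]
    rw [toG_overMul, l3, l4, toG_overMul]
    exact Gr.mul_assoc_elt _ _ _
  inv_mul' := by
    apply homGX_ext
    rw [toG_overMul, prod.lift_fst, prod.lift_snd, toG_overOne]
    have hi : toG (overInv Gr X) = prod.fst ≫ Gr.i := by
      dsimp [overInv, toG]
      erw [prod.map_fst]
    rw [hi]
    simp only [toG, Over.id_left, Category.id_comp]
    erw [Category.id_comp]
    exact Gr.inv_mul_elt (prod.fst : Gr.G ⨯ X ⟶ Gr.G)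
  mul_inv' := by
    apply homGX_ext
    rw [toG_overMul, prod.lift_fst, prod.lift_snd, toG_overOne]
    have hi : toG (overInv Gr X) = prod.fst ≫ Gr.i := by
      dsimp [overInv, toG]
      erw [prod.map_fst]
    rw [hi]
    simp only [toG, Over.id_left, Category.id_comp]
    erw [Category.id_comp]
    exact Gr.mul_inv_elt (prod.fst : Gr.G ⨯ X ⟶ Gr.G)

/-- A principal `G`-bundle over an object `X` of `C`: a `G`-object `(P, p)` with an
action-invariant morphism `f : P ⟶ X` which is an effective descent morphism and such that
`(p, π₂) : G ⨯ P ⟶ P ⨯_X P` is an isomorphism. -/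
structure PrincipalBundleOver (Gr : InternalGroup C) (X : C) where
  P : InternalGroup.GObject Gr
  f : P.A ⟶ X
  invariant : InternalGroup.act P ≫ f = prod.snd ≫ f
  descent : EffectiveDescentMorphism f
  torsor : IsIso (pullback.lift (InternalGroup.act P) prod.snd invariant)

namespace PrincipalBundleOver

variable {Gr : InternalGroup C} {X : C}

/-- A morphism of principal `G`-bundles over `X`: a `G`-homomorphism over `X`. -/
@[ext]
structure Hom (P Q : PrincipalBundleOver Gr X) where
  hom : P.P ⟶ Q.P
  w : hom.f ≫ Q.f = P.f

/-- The category of principal `G`-bundles over `X`. -/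
instance : Category (PrincipalBundleOver Gr X) where
  Hom P Q := Hom P Q
  id P := ⟨𝟙 P.P, by rw [Monad.Algebra.id_f]; simp⟩
  comp u v := ⟨u.hom ≫ v.hom, by rw [Monad.Algebra.comp_f, Category.assoc, v.w, u.w]⟩
  id_comp u := by apply Hom.ext; simp
  comp_id u := by apply Hom.ext; simp
  assoc u v w := by apply Hom.ext; simp

end PrincipalBundleOver

/-- The category of adjunctions `L ⊣ R : C ⇄ [G, C]` over `C` (i.e. `Σ_G ∘ L ≅ Id_C`)
satisfying Frobenius reciprocity; morphisms are natural transformations between the left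
adjoints. -/
structure FrobAdjObj (Gr : InternalGroup C) (SG : InternalGroup.GObject Gr ⥤ C) where
  L : C ⥤ InternalGroup.GObject Gr
  R : InternalGroup.GObject Gr ⥤ C
  adj : L ⊣ R
  isOver : Nonempty (L ⋙ SG ≅ 𝟭 C)
  frob : IsFrobenius adj

/-- A morphism of adjunctions over `C`: a natural transformation between the left adjoints. -/
@[ext]
structure FrobAdjHom {Gr : InternalGroup C} {SG : InternalGroup.GObject Gr ⥤ C}
    (A B : FrobAdjObj Gr SG) where
  nat : A.L ⟶ B.L

instance (Gr : InternalGroup C) (SG : InternalGroup.GObject Gr ⥤ C) :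
    Category (FrobAdjObj Gr SG) where
  Hom A B := FrobAdjHom A B
  id A := ⟨𝟙 A.L⟩
  comp u v := ⟨u.nat ≫ v.nat⟩
  id_comp u := by apply FrobAdjHom.ext; simp
  comp_id u := by apply FrobAdjHom.ext; simp
  assoc u v w := by apply FrobAdjHom.ext; simp

/-- The category of adjunctions `L ⊣ R : C/X ⇄ [G, C]` over `C` (i.e. `Σ_G ∘ L ≅ Σ_X`)
that are stably Frobenius; morphisms are natural transformations between the left adjoints. -/
structure StablyFrobAdjOver (Gr : InternalGroup C) (SG : InternalGroup.GObject Gr ⥤ C)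
    (X : C) where
  L : Over X ⥤ InternalGroup.GObject Gr
  R : InternalGroup.GObject Gr ⥤ Over X
  adj : L ⊣ R
  isOver : Nonempty (L ⋙ SG ≅ Over.forget X)
  frob : IsStablyFrobenius adj

/-- A morphism of adjunctions over `C`: a natural transformation between the left adjoints. -/
@[ext]
structure StablyFrobAdjHom {Gr : InternalGroup C} {SG : InternalGroup.GObject Gr ⥤ C} {X : C}
    (A B : StablyFrobAdjOver Gr SG X) where
  nat : A.L ⟶ B.L

instance (Gr : InternalGroup C) (SG : InternalGroup.GObject Gr ⥤ C) (X : C) :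
    Category (StablyFrobAdjOver Gr SG X) where
  Hom A B := StablyFrobAdjHom A B
  id A := ⟨𝟙 A.L⟩
  comp u v := ⟨u.nat ≫ v.nat⟩
  id_comp u := by apply StablyFrobAdjHom.ext; simp
  comp_id u := by apply StablyFrobAdjHom.ext; simp
  assoc u v w := by apply StablyFrobAdjHom.ext; simp

end PrincipalBundles

open PrincipalBundles PrincipalBundles.InternalGroup
open CategoryTheory CategoryTheory.Limits

/-! Frobenius reciprocity at the terminal object splits `L R V ≅ V ⨯ L 1` with the counit as
first projection, so every naturality square of the counit is a pullback. Since
`Σ_G ∘ L = Id`, the composite `R ∘ G*` is right adjoint to the identity, hence `R ∘ G* ≅ Id` and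
`L X ≅ L R G* X ≅ G* X ⨯ L 1`; as `G*` is a right adjoint and `- ⨯ L 1` preserves connected
limits, `L` preserves pullbacks. The sliced Frobenius map `L (R Y ×_{R X} W) ⟶ Y ×_X L W` is
then the comparison map between two pullbacks of `Y ⟶ X` and `L W ⟶ X`: the image under `L`
of the pullback `R Y ×_{R X} W`, pasted with the counit square of `Y ⟶ X`. -/

namespace PrincipalBundles

-- `Over.star A` is a right adjoint and `Over.forget A` creates connected limits.
instance preservesLimitsOfShape_prod_functor_obj {D : Type u₂} [Category.{v₂} D]
    [HasBinaryProducts D] {J : Type u} [Category.{v} J] [IsConnected J] (A : D) :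
    PreservesLimitsOfShape J (prod.functor.obj A) :=
  preservesLimitsOfShape_of_natIso
    (Iso.refl _ : Over.star A ⋙ Over.forget A ≅ prod.functor.obj A)

variable {D : Type u₂} [Category.{v₂} D] {E : Type u₃} [Category.{v₃} E]
variable {L : D ⥤ E} {R : E ⥤ D} (adj : L ⊣ R)

theorem slicedAdj_counit_app_left (X : E) (Y : Over X) :
    ((slicedAdj adj X).counit.app Y).left = adj.counit.app Y.left :=
  (adj.homEquiv_counit _ _ _).trans (by simp [slicedR])

variable [HasFiniteLimits D] [HasFiniteLimits E]

theorem frobMap_fst (W : D) (X : E) :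
    frobMap adj W X ≫ prod.fst = L.map prod.fst ≫ adj.counit.app X :=
  prod.lift_fst _ _

theorem frobMap_snd (W : D) (X : E) : frobMap adj W X ≫ prod.snd = L.map prod.snd :=
  prod.lift_snd _ _

variable {adj}

def IsFrobenius.leftRightIso (hfrob : IsFrobenius adj) (V : E) :
    L.obj (R.obj V) ≅ V ⨯ L.obj (⊤_ D) :=
  haveI := hfrob (⊤_ D) V
  asIso (L.map (prod.rightUnitor (R.obj V)).inv ≫ frobMap adj (⊤_ D) V)

theorem IsFrobenius.leftRightIso_hom_fst (hfrob : IsFrobenius adj) (V : E) :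
    (hfrob.leftRightIso V).hom ≫ prod.fst = adj.counit.app V := by
  simp [IsFrobenius.leftRightIso, frobMap_fst, ← L.map_comp_assoc]

theorem IsFrobenius.leftRightIso_hom_snd (hfrob : IsFrobenius adj) (V : E) :
    (hfrob.leftRightIso V).hom ≫ prod.snd = L.map (terminal.from (R.obj V)) := by
  simp only [IsFrobenius.leftRightIso, asIso_hom, Category.assoc, frobMap_snd, ← L.map_comp]
  congr 1
  exact Subsingleton.elim _ _

theorem IsFrobenius.leftRightIso_hom_naturality (hfrob : IsFrobenius adj) {V V' : E}
    (g : V ⟶ V') :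
    L.map (R.map g) ≫ (hfrob.leftRightIso V').hom
      = (hfrob.leftRightIso V).hom ≫ prod.map g (𝟙 _) := by
  ext
  · rw [Category.assoc, Category.assoc, hfrob.leftRightIso_hom_fst, prod.map_fst,
      ← Category.assoc, hfrob.leftRightIso_hom_fst, adj.counit_naturality]
  · simp only [Category.assoc, hfrob.leftRightIso_hom_snd, prod.map_snd, Category.comp_id,
      ← L.map_comp, terminal.comp_from]

theorem IsFrobenius.isPullback_counit (hfrob : IsFrobenius adj) {V V' : E} (g : V ⟶ V') :
    IsPullback (adj.counit.app V) (L.map (R.map g)) g (adj.counit.app V') :=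
  (IsPullback.of_prod_fst_with_id g (L.obj (⊤_ D))).of_iso (hfrob.leftRightIso V).symm
    (Iso.refl _) (hfrob.leftRightIso V').symm (Iso.refl _)
    (by simp [Iso.eq_inv_comp, hfrob.leftRightIso_hom_fst])
    (by rw [Iso.symm_hom, Iso.symm_hom, Iso.eq_inv_comp, ← Category.assoc,
      ← hfrob.leftRightIso_hom_naturality, Category.assoc, Iso.hom_inv_id, Category.comp_id])
    (by simp) (by simp [Iso.eq_inv_comp, hfrob.leftRightIso_hom_fst])

def IsFrobenius.rightCompLeftIso (hfrob : IsFrobenius adj) :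
    R ⋙ L ≅ prod.functor.obj (L.obj (⊤_ D)) :=
  NatIso.ofComponents (fun V => hfrob.leftRightIso V ≪≫ prod.braiding _ _)
    (fun g => by
      change L.map (R.map g) ≫ (hfrob.leftRightIso _).hom ≫ (prod.braiding _ _).hom
        = ((hfrob.leftRightIso _).hom ≫ (prod.braiding _ _).hom) ≫ prod.map (𝟙 _) g
      rw [← Category.assoc, hfrob.leftRightIso_hom_naturality, Category.assoc, braid_natural,
        Category.assoc])

theorem IsFrobenius.preservesPullbacks_left (hfrob : IsFrobenius adj) {T : D ⥤ E}
    [PreservesLimitsOfShape WalkingCospan T] (ρ : T ⋙ R ≅ 𝟭 D) :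
    PreservesLimitsOfShape WalkingCospan L :=
  preservesLimitsOfShape_of_natIso <|
    (Functor.isoWhiskerLeft T hfrob.rightCompLeftIso).symm ≪≫ (Functor.associator T R L).symm ≪≫
      Functor.isoWhiskerRight ρ L ≪≫ L.leftUnitor

variable (adj)

theorem isStablyFrobenius_of_isPullback_counit [PreservesLimitsOfShape WalkingCospan L]
    (hε : ∀ {V V' : E} (g : V ⟶ V'),
      IsPullback (adj.counit.app V) (L.map (R.map g)) g (adj.counit.app V')) :
    IsStablyFrobenius adj := by
  intro X W Y
  have hdom : IsPullback
      (L.map (prod.fst : (slicedR adj X).obj Y ⨯ W ⟶ _).left ≫ adj.counit.app Y.left)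
      (L.map (prod.snd : (slicedR adj X).obj Y ⨯ W ⟶ _).left) Y.hom
      (L.map W.hom ≫ adj.counit.app X) :=
    (L.map_isPullback (Over.isPullback_of_binaryFan_isLimit _ (limit.isLimit _))).paste_horiz
      (hε Y.hom)
  have hcod : IsPullback (prod.fst : Y ⨯ (slicedL adj X).obj W ⟶ _).left
      (prod.snd : Y ⨯ (slicedL adj X).obj W ⟶ _).left Y.hom ((slicedL adj X).obj W).hom :=
    Over.isPullback_of_binaryFan_isLimit _ (limit.isLimit _)
  have hleft : (frobMap (slicedAdj adj X) W Y).left = (hdom.isoIsPullback _ _ hcod).hom := by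
    apply hcod.hom_ext
    · refine Eq.trans ?_ (hdom.isoIsPullback_hom_fst _ _ hcod).symm
      rw [← Over.comp_left, frobMap_fst, Over.comp_left, slicedAdj_counit_app_left]
      rfl
    · refine Eq.trans ?_ (hdom.isoIsPullback_hom_snd _ _ hcod).symm
      rw [← Over.comp_left, frobMap_snd]
      rfl
  have : IsIso ((Over.forget X).map (frobMap (slicedAdj adj X) W Y)) := by
    rw [Over.forget_map, hleft]
    exact Iso.isIso_hom _
  exact isIso_of_reflects_iso _ (Over.forget X)

end PrincipalBundles

theorem statement12_general {C : Type u} [Category.{v} C] [HasFiniteLimits C] (Gr : InternalGroup C)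
    (SG : GObject Gr ⥤ C) (SGadj : SG ⊣ trivAction Gr)
    (L : C ⥤ GObject Gr) (R : GObject Gr ⥤ C) (adj : L ⊣ R) (hover : L ⋙ SG = 𝟭 C)
    (hfrob : IsFrobenius adj) :
    IsStablyFrobenius adj := by
  let ρ : trivAction Gr ⋙ R ≅ 𝟭 C :=
    Adjunction.rightAdjointUniq ((adj.comp SGadj).ofNatIsoLeft (eqToIso hover)) Adjunction.id
  have := SGadj.rightAdjoint_preservesLimits.{0, 0}
  have := hfrob.preservesPullbacks_left ρ
  exact isStablyFrobenius_of_isPullback_counit adj hfrob.isPullback_counit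

/-- If `Σ_G ⊣ G*` satisfies Frobenius reciprocity, then every adjunction
`L ⊣ R : C ⇄ [G, C]` over `C` satisfying Frobenius reciprocity is stably Frobenius. -/
theorem statement12 {C : Type u} [Category.{v} C] [HasFiniteLimits C] (Gr : InternalGroup C)
    (SG : GObject Gr ⥤ C) (SGadj : SG ⊣ trivAction Gr) (hSG : IsFrobenius SGadj)
    (L : C ⥤ GObject Gr) (R : GObject Gr ⥤ C) (adj : L ⊣ R) (hover : L ⋙ SG = 𝟭 C)
    (hfrob : IsFrobenius adj) :
    IsStablyFrobenius adj :=
  statement12_general Gr SG SGadj L R adj hover hfrob
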